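/- arXiv:1003.3070 — 2 statements merged into one kernel-verified Lean document; each statement's English description precedes it below -/
import Mathlib

section
/- Let V : ℝ → ℝ be a non-constant real analytic function whose derivative V' does not change sign on ℝ. Let h : ℝ → ℝ be a real analytic function and let μ be the Borel probability measure on ℝ with density dμ(t) = (1/π)·√(h⁺(t)) dt, where h⁺(t) = max(h(t), 0). Suppose that for every x the logarithmic potential U^μ(x) = ∫ ln(1/|x−t|) dμ(t) is well defined, and that there is a constant F with U^μ(x) + V(x) = F for all x in the support of μ and U^μ(x) + V(x) ≥ F for all x ∈ ℝ. Then the support of μ is an unbounded subset of ℝ. -/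
open MeasureTheory Real Filter Set

/-- Truncated Hilbert transform integral at level `ε`:
`(1/π) ∫_{|x-t|>ε} f(t)/(x-t) dt`. -/
noncomputable def truncHilbert (f : ℝ → ℝ) (x ε : ℝ) : ℝ :=
  (1 / Real.pi) * ∫ t in {t : ℝ | ε < |x - t|}, f t / (x - t)

/-- `HilbertAt f x L` : the principal-value Hilbert transform of `f` at `x` exists
and equals `L`. -/
def HilbertAt (f : ℝ → ℝ) (x L : ℝ) : Prop :=
  Filter.Tendsto (fun ε => truncHilbert f x ε) (nhdsWithin 0 (Set.Ioi 0)) (nhds L)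

/-- The support of a Borel measure on `ℝ`: the set of points every neighborhood of
which has positive measure. -/
noncomputable def measSupport (μ : Measure ℝ) : Set ℝ := {x | ∀ U ∈ nhds x, 0 < μ U}

/-!
If the support of `μ` is bounded, the potential `U^μ(x)` behaves like `-log |x|` and tends to
`-∞` as `|x| → ∞`. A function `V` with `V'` of constant sign is monotone, hence bounded above
by `V 0` on one of the half-lines `(-∞, 0]`, `[0, ∞)`. Along that half-line `U^μ + V → -∞`,
which contradicts `U^μ + V ≥ F`.
-/

lemma measSupport_eq_support (μ : Measure ℝ) : measSupport μ = μ.support :=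
  Set.ext fun x => (Measure.mem_support_iff_forall x).symm

noncomputable def logPotential (μ : Measure ℝ) (x : ℝ) : ℝ :=
  ∫ t, log (1 / |x - t|) ∂μ

lemma logPotential_le_neg_log (μ : Measure ℝ) [IsProbabilityMeasure μ] {x r : ℝ}
    (hint : Integrable (fun t => log (1 / |x - t|)) μ) (hr : 0 < r)
    (hdist : ∀ᵐ t ∂μ, r ≤ |x - t|) :
    logPotential μ x ≤ -log r := by
  have hbound : ∀ᵐ t ∂μ, log (1 / |x - t|) ≤ -log r := by
    filter_upwards [hdist] with t ht
    rw [one_div, log_inv, neg_le_neg_iff]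
    exact log_le_log hr ht
  calc logPotential μ x ≤ ∫ _, -log r ∂μ := integral_mono_ae hint (integrable_const _) hbound
    _ = -log r := by simp

lemma tendsto_logPotential_cocompact_atBot (μ : Measure ℝ) [IsProbabilityMeasure μ]
    (hbdd : Bornology.IsBounded μ.support)
    (hint : ∀ x, Integrable (fun t => log (1 / |x - t|)) μ) :
    Tendsto (logPotential μ) (cocompact ℝ) atBot := by
  obtain ⟨R, hR⟩ := (Metric.isBounded_iff_subset_closedBall 0).1 hbdd
  have hdist_atTop : Tendsto (fun x : ℝ => |x| - R) (cocompact ℝ) atTop :=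
    tendsto_atTop_add_const_right _ _ tendsto_norm_cocompact_atTop
  have hbound : ∀ᶠ x in cocompact ℝ, logPotential μ x ≤ -log (|x| - R) := by
    filter_upwards [hdist_atTop.eventually_gt_atTop 0] with x hx
    refine logPotential_le_neg_log μ (hint x) hx ?_
    filter_upwards [Measure.support_mem_ae (μ := μ)] with t ht
    have htR : |t| ≤ R := by simpa using hR ht
    linarith [abs_sub_abs_le_abs_sub x t]
  exact tendsto_atBot_mono' _ hbound
    (tendsto_neg_atTop_atBot.comp (tendsto_log_atTop.comp hdist_atTop))

theorem equilibrium_support_unbounded_general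
    (V : ℝ → ℝ)
    (hV : AnalyticOnNhd ℝ V Set.univ)
    (hVsign : (∀ x : ℝ, 0 ≤ deriv V x) ∨ (∀ x : ℝ, deriv V x ≤ 0))
    (μ : Measure ℝ)
    (hprob : IsProbabilityMeasure μ)
    (hUdef : ∀ x : ℝ, Integrable (fun t => Real.log (1 / |x - t|)) μ)
    (F : ℝ)
    (hge : ∀ x : ℝ, F ≤ (∫ t, Real.log (1 / |x - t|) ∂μ) + V x) :
    ¬ Bornology.IsBounded (measSupport μ) := by
  intro hbdd
  rw [measSupport_eq_support] at hbdd
  have hU := tendsto_logPotential_cocompact_atBot μ hbdd hUdef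
  have hVdiff : Differentiable ℝ V := fun x => (hV x (mem_univ x)).differentiableAt
  obtain ⟨l, hl, hlNeBot, hVl⟩ :
      ∃ l ≤ cocompact ℝ, l.NeBot ∧ ∀ᶠ x in l, V x ≤ V 0 := by
    rcases hVsign with hpos | hneg
    · exact ⟨atBot, atBot_le_cocompact, inferInstance,
        (eventually_le_atBot 0).mono fun x hx => monotone_of_deriv_nonneg hVdiff hpos hx⟩
    · exact ⟨atTop, atTop_le_cocompact, inferInstance,
        (eventually_ge_atTop 0).mono fun x hx => antitone_of_deriv_nonpos hVdiff hneg hx⟩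
  obtain ⟨x, hx⟩ :=
    ((tendsto_atBot_add_right_of_ge' l (V 0) (hU.mono_left hl) hVl).eventually_lt_atBot F).exists
  exact (hge x).not_gt hx

theorem equilibrium_support_unbounded
    (V h : ℝ → ℝ)
    (hV : AnalyticOnNhd ℝ V Set.univ)
    (hVnonconst : ¬ ∃ c : ℝ, ∀ x : ℝ, V x = c)
    (hVsign : (∀ x : ℝ, 0 ≤ deriv V x) ∨ (∀ x : ℝ, deriv V x ≤ 0))
    (hh : AnalyticOnNhd ℝ h Set.univ)
    (μ : Measure ℝ)
    (hμ : μ = MeasureTheory.volume.withDensity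
      (fun t => ENNReal.ofReal ((1 / Real.pi) * Real.sqrt (max (h t) 0))))
    (hprob : IsProbabilityMeasure μ)
    (hUdef : ∀ x : ℝ, Integrable (fun t => Real.log (1 / |x - t|)) μ)
    (F : ℝ)
    (heq : ∀ x ∈ measSupport μ, (∫ t, Real.log (1 / |x - t|) ∂μ) + V x = F)
    (hge : ∀ x : ℝ, F ≤ (∫ t, Real.log (1 / |x - t|) ∂μ) + V x) :
    ¬ Bornology.IsBounded (measSupport μ) :=
  equilibrium_support_unbounded_general V hV hVsign μ hprob hUdef F hge
end

section
/- For all real numbers a and b, (1/π) ∫_{-∞}^{∞} ln|(x−a)/(x−b)| · 1/(1+x²) dx = ln √((a²+1)/(b²+1)). -/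
/-!
Substituting `x = tan θ` turns `dx / (1 + x²)` into `dθ` on `(-π/2, π/2)`, and with `φ = arctan c`
the identity `tan θ - tan φ = sin (θ - φ) / (cos θ cos φ)` gives
`log |tan θ - c| = log |sin (θ - φ)| - log |cos θ| + log √(1 + c²)`.
Both `log |sin (θ - φ)|` and `log |cos θ|` are `π`-periodic, so their integrals over an interval of
length `π` agree and cancel, leaving `∫ log |x - c| / (1 + x²) dx = π log √(1 + c²)`.
-/

open MeasureTheory Real Set

theorem tan_sub_tan {x y : ℝ} (hx : cos x ≠ 0) (hy : cos y ≠ 0) :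
    tan x - tan y = sin (x - y) / (cos x * cos y) := by
  rw [tan_eq_sin_div_cos, tan_eq_sin_div_cos, sin_sub]
  field_simp

theorem hasDerivWithinAt_tan_Ioo :
    ∀ θ ∈ Ioo (-(π / 2)) (π / 2),
      HasDerivWithinAt tan (1 + tan θ ^ 2) (Ioo (-(π / 2)) (π / 2)) θ :=
  fun θ hθ => by
    have hcos := (cos_pos_of_mem_Ioo hθ).ne'
    have h := (hasDerivAt_tan hcos).hasDerivWithinAt (s := Ioo (-(π / 2)) (π / 2))
    rwa [one_div, ← inv_one_add_tan_sq hcos, inv_inv] at h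

theorem integrable_div_one_add_sq_iff (g : ℝ → ℝ) :
    Integrable (fun x => g x / (1 + x ^ 2)) ↔
      IntegrableOn (g ∘ tan) (Ioo (-(π / 2)) (π / 2)) := by
  have h := integrableOn_image_iff_integrableOn_abs_deriv_smul measurableSet_Ioo
    hasDerivWithinAt_tan_Ioo injOn_tan (fun x => g x / (1 + x ^ 2))
  rw [image_tan_Ioo, integrableOn_univ] at h
  rw [h]
  refine integrableOn_congr_fun (fun θ _ => ?_) measurableSet_Ioo
  have : 0 < 1 + tan θ ^ 2 := by positivity
  simp only [smul_eq_mul, abs_of_pos this, Function.comp_apply]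
  field_simp

theorem integral_div_one_add_sq_eq (g : ℝ → ℝ) :
    ∫ x, g x / (1 + x ^ 2) = ∫ θ in Ioo (-(π / 2)) (π / 2), g (tan θ) := by
  have h := integral_image_eq_integral_abs_deriv_smul measurableSet_Ioo
    hasDerivWithinAt_tan_Ioo injOn_tan (fun x => g x / (1 + x ^ 2))
  rw [image_tan_Ioo, setIntegral_univ] at h
  rw [h]
  refine setIntegral_congr_fun measurableSet_Ioo (fun θ _ => ?_)
  have : 0 < 1 + tan θ ^ 2 := by positivity
  simp only [smul_eq_mul, abs_of_pos this]
  field_simp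

-- `Real.log` is `log |·|` by definition, so the absolute values of the statement are dropped.
theorem periodic_log_sin : Function.Periodic (fun θ => log (sin θ)) π :=
  fun θ => by simp only [sin_add_pi, log_neg_eq_log]

theorem integral_log_sin_sub (ψ : ℝ) :
    ∫ θ in -(π / 2)..π / 2, log (sin (θ - ψ)) = ∫ θ in 0..π, log (sin θ) := by
  rw [intervalIntegral.integral_comp_sub_right (fun θ => log (sin θ)),
    show π / 2 - ψ = -(π / 2) - ψ + π by ring, periodic_log_sin.intervalIntegral_add_eq, zero_add]

theorem integral_log_cos :
    ∫ θ in -(π / 2)..π / 2, log (cos θ) = ∫ θ in 0..π, log (sin θ) := by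
  simpa [sin_add_pi_div_two] using integral_log_sin_sub (-(π / 2))

theorem intervalIntegrable_log_sin_sub (ψ a b : ℝ) :
    IntervalIntegrable (fun θ => log (sin (θ - ψ))) volume a b := by
  simpa using (intervalIntegrable_log_sin (a := a - ψ) (b := b - ψ)).comp_sub_right ψ

theorem log_tan_sub_ae_eq (c : ℝ) :
    (fun θ => log (tan θ - c)) =ᵐ[volume.restrict (Ioo (-(π / 2)) (π / 2))]
      fun θ => log (sin (θ - arctan c)) - log (cos θ) + log √(c ^ 2 + 1) := by
  filter_upwards [ae_restrict_mem measurableSet_Ioo,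
    ae_restrict_of_ae (compl_mem_ae_iff.2 (measure_singleton (arctan c)))] with θ hθ hne
  have hcosθ := (cos_pos_of_mem_Ioo hθ).ne'
  have hcosφ := (cos_arctan_pos c).ne'
  have hsin : sin (θ - arctan c) ≠ 0 := by
    rw [Ne, sin_eq_zero_iff_of_lt_of_lt, sub_eq_zero]
    · exact hne
    · linarith [hθ.1, arctan_lt_pi_div_two c]
    · linarith [hθ.2, neg_pi_div_two_lt_arctan c]
  have htan := tan_sub_tan hcosθ hcosφ
  rw [tan_arctan] at htan
  rw [htan, log_div hsin (mul_ne_zero hcosθ hcosφ), log_mul hcosθ hcosφ, cos_arctan, one_div,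
    log_inv, add_comm (c ^ 2)]
  ring

theorem integrable_log_sub_div_one_add_sq (c : ℝ) :
    Integrable (fun x => log (x - c) / (1 + x ^ 2)) := by
  rw [integrable_div_one_add_sq_iff (fun x => log (x - c))]
  refine IntegrableOn.congr_fun_ae ?_ (log_tan_sub_ae_eq c).symm
  rw [← intervalIntegrable_iff_integrableOn_Ioo_of_le (by linarith [pi_pos])]
  exact ((intervalIntegrable_log_sin_sub _ _ _).sub intervalIntegrable_log_cos).add
    intervalIntegrable_const

theorem integral_log_sub_div_one_add_sq (c : ℝ) :
    ∫ x, log (x - c) / (1 + x ^ 2) = π * log √(c ^ 2 + 1) := by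
  have hsin := intervalIntegrable_log_sin_sub (arctan c) (-(π / 2)) (π / 2)
  have hcos : IntervalIntegrable (fun θ => log (cos θ)) volume (-(π / 2)) (π / 2) :=
    intervalIntegrable_log_cos
  rw [integral_div_one_add_sq_eq (fun x => log (x - c)), integral_congr_ae (log_tan_sub_ae_eq c),
    ← integral_Ioc_eq_integral_Ioo, ← intervalIntegral.integral_of_le (by linarith [pi_pos]),
    intervalIntegral.integral_add (hsin.sub hcos) intervalIntegrable_const,
    intervalIntegral.integral_sub hsin hcos, integral_log_sin_sub,
    integral_log_cos, intervalIntegral.integral_const, smul_eq_mul]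
  ring

theorem integral_log_ratio_div_one_add_sq (a b : ℝ) :
    Integrable (fun x => Real.log |(x - a) / (x - b)| / (1 + x ^ 2)) ∧
    (1 / Real.pi) * ∫ x : ℝ, Real.log |(x - a) / (x - b)| / (1 + x ^ 2) =
      Real.log (Real.sqrt ((a ^ 2 + 1) / (b ^ 2 + 1))) := by
  have hae : (fun x => log (x - a) / (1 + x ^ 2) - log (x - b) / (1 + x ^ 2))
      =ᵐ[volume] fun x => log |(x - a) / (x - b)| / (1 + x ^ 2) := by
    filter_upwards [compl_mem_ae_iff.2 (measure_singleton a),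
      compl_mem_ae_iff.2 (measure_singleton b)] with x hxa hxb
    rw [log_abs, log_div (sub_ne_zero.2 hxa) (sub_ne_zero.2 hxb), sub_div]
  have hia := integrable_log_sub_div_one_add_sq a
  have hib := integrable_log_sub_div_one_add_sq b
  refine ⟨(hia.sub hib).congr hae, ?_⟩
  rw [← integral_congr_ae hae, integral_sub hia hib, integral_log_sub_div_one_add_sq,
    integral_log_sub_div_one_add_sq, ← mul_sub, one_div, inv_mul_cancel_left₀ pi_ne_zero,
    sqrt_div' _ (by positivity : 0 ≤ b ^ 2 + 1),
    log_div (by positivity) (by positivity)]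
end
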